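/- Let X be a non-separable, reflexive complex Banach space with few operators, i.e. every bounded linear operator T : X → X can be written as T = α·id_X + S with α ∈ ℂ and S a bounded operator with separable range. Then the dual space E = X' contains a closed linear subspace D which is not of the form ⋂_{i=1}^n ker T_i for any n ∈ ℕ and any bounded linear operators T_1, …, T_n : E → E; in particular, D is not the kernel of any bounded linear operator on E. -/

import Mathlib

open NormedSpace TopologicalSpace

/-!
By Zorn's lemma, a non-separable reflexive space carries an uncountable biorthogonal system
`(x i, f i)` with `‖f i‖ ≤ 1`. Its vectors are `1`-separated, so no uncountable subfamily of it,
or of any system biorthogonal to the same functionals, lies in a separable set. The extension step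
of the Zorn argument uses reflexivity: the functionals vanishing on the common kernel of countably
many functionals form their closed span, which is separable, so that kernel is not contained in a
separable subspace.

Split the index set into two uncountable halves and let `D` be the annihilator of the span `W` of
the first half of the vectors. If `D = ⋂ ker T i`, then by reflexivity `T i` is the adjoint of some
`K i`, and the closed span of the ranges of the `K i` is `closure W`. Write `K i = α i • id + S i`
with `S i` of separable range. If all `α i` vanish, `W` is separable. If `α j ≠ 0`, every vector is
congruent modulo `closure W` to a vector of `range (S j)`; since the second half of the functionals
kills `W`, this moves the second half of the vectors into a separable set without destroying
biorthogonality. Both cases contradict uncountability.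
-/

universe u v

section

open Set Submodule StrongDual

variable {𝕜 : Type u} [RCLike 𝕜] {X : Type v} [NormedAddCommGroup X] [NormedSpace 𝕜 X]

theorem Submodule.exists_dual_mem_polarSubmodule_apply_ne_zero {V : Submodule 𝕜 X}
    (hV : IsClosed (V : Set X)) {x : X} (hx : x ∉ V) :
    ∃ f : StrongDual 𝕜 X, ‖f‖ ≤ 1 ∧ f ∈ polarSubmodule 𝕜 V ∧ f x ≠ 0 := by
  have : IsClosed (V : Set X) := hV -- makes `X ⧸ V` a normed group
  have hx' : ‖V.mkQ x‖ ≠ 0 := by simpa [Submodule.Quotient.mk_eq_zero] using hx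
  obtain ⟨g, hg, hgx⟩ := exists_dual_vector 𝕜 (V.mkQ x) hx'
  refine ⟨g ∘L V.mkQL, ?_, ?_, ?_⟩
  · refine ContinuousLinearMap.opNorm_le_bound _ zero_le_one fun y => ?_
    calc ‖g (V.mkQ y)‖ ≤ ‖g‖ * ‖V.mkQ y‖ := g.le_opNorm _
      _ ≤ 1 * ‖y‖ := by rw [hg]; gcongr; exact Submodule.Quotient.norm_mk_le V y
  · rw [mem_polarSubmodule]
    intro v hv
    simp [(Submodule.Quotient.mk_eq_zero V).2 hv]
  · rw [ContinuousLinearMap.comp_apply, Submodule.mkQL_apply, hgx]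
    exact_mod_cast hx'

theorem StrongDual.isClosed_polarSubmodule (V : Submodule 𝕜 X) :
    IsClosed (polarSubmodule 𝕜 V : Set (StrongDual 𝕜 X)) :=
  polarSubmodule_eq_polar 𝕜 V.toSubMulAction ▸ NormedSpace.isClosed_polar 𝕜 _

theorem StrongDual.mem_polarSubmodule_span {s : Set X} {f : StrongDual 𝕜 X} :
    f ∈ polarSubmodule 𝕜 (span 𝕜 s) ↔ ∀ x ∈ s, f x = 0 := by
  rw [mem_polarSubmodule]
  exact ⟨fun h x hx => h x (subset_span hx),
    fun h y hy => span_le (p := LinearMap.ker (f : X →ₗ[𝕜] 𝕜)).2 h hy⟩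

theorem StrongDual.apply_eq_zero_of_mem_topologicalClosure_span {s : Set X} {f : StrongDual 𝕜 X}
    (hf : ∀ x ∈ s, f x = 0) {y : X} (hy : y ∈ (span 𝕜 s).topologicalClosure) : f y = 0 :=
  topologicalClosure_minimal _ (span_le (p := LinearMap.ker (f : X →ₗ[𝕜] 𝕜)).2 hf) f.isClosed_ker hy

theorem Submodule.le_topologicalClosure_of_polarSubmodule_le {U V : Submodule 𝕜 X}
    (h : polarSubmodule 𝕜 V ≤ polarSubmodule 𝕜 U) : U ≤ V.topologicalClosure := by
  intro u hu
  by_contra hu'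
  obtain ⟨f, -, hf, hfu⟩ :=
    exists_dual_mem_polarSubmodule_apply_ne_zero V.isClosed_topologicalClosure hu'
  rw [mem_polarSubmodule] at hf
  have hfV : f ∈ polarSubmodule 𝕜 V :=
    (mem_polarSubmodule _ _ _).2 fun v hv => hf v (V.le_topologicalClosure hv)
  exact hfu ((mem_polarSubmodule _ _ _).1 (h hfV) u hu)

theorem mem_topologicalClosure_span_of_forall_apply_eq_zero
    (hrefl : Function.Surjective (inclusionInDoubleDual 𝕜 X)) {G : Set (StrongDual 𝕜 X)}
    {f : StrongDual 𝕜 X} (hf : ∀ x, (∀ g ∈ G, g x = 0) → f x = 0) :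
    f ∈ (span 𝕜 G).topologicalClosure := by
  by_contra hfG
  obtain ⟨Φ, -, hΦ, hΦf⟩ :=
    exists_dual_mem_polarSubmodule_apply_ne_zero (isClosed_topologicalClosure _) hfG
  obtain ⟨x, rfl⟩ := hrefl Φ
  rw [mem_polarSubmodule] at hΦ
  exact hΦf (hf x fun g hg => hΦ g (le_topologicalClosure _ (subset_span hg)))

theorem TopologicalSpace.IsSeparable.exists_countable_separating {F : Set (StrongDual 𝕜 X)}
    (hF : IsSeparable F) : ∃ C : Set X, C.Countable ∧ ∀ f ∈ F, (∀ x ∈ C, f x = 0) → f = 0 := by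
  obtain ⟨c, hc, hFc⟩ := hF
  have hnorming : ∀ g : StrongDual 𝕜 X, ∃ x : X, ‖x‖ ≤ 1 ∧ ‖g‖ ≤ 2 * ‖g x‖ := by
    intro g
    rcases eq_or_ne g 0 with rfl | hg
    · exact ⟨0, by simp⟩
    obtain ⟨x, hx, hgx⟩ := g.exists_lt_apply_of_lt_opNorm (half_lt_self (norm_pos_iff.2 hg))
    exact ⟨x, hx.le, by linarith⟩
  choose xg hxg_norm hxg using hnorming
  refine ⟨xg '' c, hc.image xg, fun f hfF hf => ?_⟩
  by_contra hf0
  have hf_pos : 0 < ‖f‖ := norm_pos_iff.2 hf0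
  obtain ⟨g, hgc, hfg⟩ := Metric.mem_closure_iff.1 (hFc hfF) (‖f‖ / 3) (by positivity)
  rw [dist_eq_norm] at hfg
  have hg : ‖g‖ ≤ 2 * ‖f - g‖ := calc
    ‖g‖ ≤ 2 * ‖g (xg g)‖ := hxg g
    _ = 2 * ‖(f - g) (xg g)‖ := by simp [hf _ (mem_image_of_mem xg hgc)]
    _ ≤ 2 * ‖f - g‖ := by gcongr; simpa using (f - g).le_opNorm_of_le (hxg_norm g)
  linarith [norm_sub_norm_le f g]

theorem exists_notMem_forall_apply_eq_zero (hnonsep : ¬ SeparableSpace X)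
    (hrefl : Function.Surjective (inclusionInDoubleDual 𝕜 X)) {G : Set (StrongDual 𝕜 X)}
    (hG : G.Countable) {V : Set X} (hV : IsSeparable V) : ∃ x ∉ V, ∀ g ∈ G, g x = 0 := by
  by_contra! hGV
  obtain ⟨C, hC, hC_sep⟩ := (hG.isSeparable.span (R := 𝕜)).closure.exists_countable_separating
  set M := (span 𝕜 (C ∪ V)).topologicalClosure
  have hM : IsSeparable (M : Set X) := (hC.isSeparable.union hV).span.closure
  obtain ⟨y, hy⟩ : ∃ y, y ∉ M := by
    by_contra! h
    exact hnonsep (isSeparable_univ_iff.1 (hM.mono fun y _ => h y))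
  obtain ⟨f, -, hfM, hfy⟩ :=
    exists_dual_mem_polarSubmodule_apply_ne_zero (isClosed_topologicalClosure _) hy
  rw [mem_polarSubmodule] at hfM
  have hf_union : ∀ x ∈ C ∪ V, f x = 0 := fun x hx =>
    hfM x (le_topologicalClosure _ (subset_span hx))
  have hfG : f ∈ (span 𝕜 G).topologicalClosure :=
    mem_topologicalClosure_span_of_forall_apply_eq_zero hrefl fun x hx =>
      hf_union x (Or.inr (by_contra fun hxV => (hGV x hxV).elim fun g hg => hg.2 (hx g hg.1)))
  exact hfy (by rw [hC_sep f hfG fun x hx => hf_union x (Or.inl hx)]; rfl)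

variable {ι κ : Type*}

def IsBiorthogonal (x : ι → X) (f : ι → StrongDual 𝕜 X) : Prop :=
  (∀ i, f i (x i) = 1) ∧ Pairwise fun i j => f i (x j) = 0

namespace IsBiorthogonal

variable {x y : ι → X} {f : ι → StrongDual 𝕜 X}

theorem comp (h : IsBiorthogonal x f) {e : κ → ι} (he : e.Injective) :
    IsBiorthogonal (x ∘ e) (f ∘ e) :=
  ⟨fun i => h.1 (e i), fun _ _ hij => h.2 (he.ne hij)⟩

theorem of_apply_sub_eq_zero (h : IsBiorthogonal x f) (hxy : ∀ i j, f i (x j - y j) = 0) :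
    IsBiorthogonal y f := by
  have hfy : ∀ i j, f i (y j) = f i (x j) := fun i j =>
    (sub_eq_zero.1 ((map_sub _ _ _).symm.trans (hxy i j))).symm
  exact ⟨fun i => (hfy i i).trans (h.1 i), fun i j hij => (hfy i j).trans (h.2 hij)⟩

theorem countable_of_isSeparable (h : IsBiorthogonal x f) (hf : ∀ i, ‖f i‖ ≤ 1)
    (hx : IsSeparable (range x)) : Countable ι := by
  have hsep : Pairwise fun i j => 1 ≤ dist (x i) (x j) := fun i j hij => calc
    1 = ‖f i (x i - x j)‖ := by simp [h.1 i, h.2 hij]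
    _ ≤ ‖f i‖ * ‖x i - x j‖ := (f i).le_opNorm _
    _ ≤ dist (x i) (x j) := by
      rw [dist_eq_norm]; exact mul_le_of_le_one_left (norm_nonneg _) (hf i)
  have hinj : x.Injective := fun i j hij =>
    by_contra fun hne => (hsep hne).not_gt (by simp [hij])
  have : SeparableSpace (range x) := hx.separableSpace
  have : DiscreteTopology (range x) := .of_forall_le_dist one_pos <| by
    rintro ⟨_, i, rfl⟩ ⟨_, j, rfl⟩ hne
    exact hsep fun hij => hne (by simp [hij])
  have : Countable (range x) := separableSpace_iff_countable.1 ‹_›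
  exact (rangeFactorization_injective.2 hinj).countable

end IsBiorthogonal

theorem exists_extend_biorthogonal (hnonsep : ¬ SeparableSpace X)
    (hrefl : Function.Surjective (inclusionInDoubleDual 𝕜 X))
    {S : Set (X × StrongDual 𝕜 X)} (hS : S.Countable) :
    ∃ p : X × StrongDual 𝕜 X, ‖p.2‖ ≤ 1 ∧ p.2 p.1 = 1 ∧ ∀ q ∈ S, p.2 q.1 = 0 ∧ q.2 p.1 = 0 := by
  obtain ⟨x, hxV, hxG⟩ := exists_notMem_forall_apply_eq_zero hnonsep hrefl (hS.image Prod.snd)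
    ((hS.image Prod.fst).isSeparable.span (R := 𝕜)).closure
  obtain ⟨f, hf, hfV, hfx⟩ :=
    exists_dual_mem_polarSubmodule_apply_ne_zero (isClosed_topologicalClosure _) hxV
  refine ⟨((f x)⁻¹ • x, f), hf, by simp [hfx], fun q hq => ⟨?_, ?_⟩⟩
  · exact (mem_polarSubmodule _ _ _).1 hfV q.1
      (le_topologicalClosure _ (subset_span (mem_image_of_mem _ hq)))
  · simp [hxG q.2 (mem_image_of_mem _ hq)]

theorem exists_uncountable_isBiorthogonal (hnonsep : ¬ SeparableSpace X)
    (hrefl : Function.Surjective (inclusionInDoubleDual 𝕜 X)) :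
    ∃ (ι : Type (max u v)) (x : ι → X) (f : ι → StrongDual 𝕜 X),
      Uncountable ι ∧ (∀ i, ‖f i‖ ≤ 1) ∧ IsBiorthogonal x f := by
  let P : Set (Set (X × StrongDual 𝕜 X)) :=
    {S | ∀ p ∈ S, ‖p.2‖ ≤ 1 ∧ p.2 p.1 = 1 ∧ ∀ q ∈ S, p ≠ q → p.2 q.1 = 0}
  obtain ⟨S, hS⟩ := zorn_subset P fun c hcP hc => by
    refine ⟨⋃₀ c, fun p ⟨s, hs, hps⟩ => ⟨(hcP hs p hps).1, (hcP hs p hps).2.1, ?_⟩,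
      fun s => subset_sUnion_of_mem⟩
    rintro q ⟨t, ht, hqt⟩ hpq
    rcases hc.total hs ht with hst | hts
    · exact (hcP ht p (hst hps)).2.2 q hqt hpq
    · exact (hcP hs p hps).2.2 q (hts hqt) hpq
  refine ⟨S, fun p => p.1.1, fun p => p.1.2, ?_, fun p => (hS.prop p.1 p.2).1,
    fun p => (hS.prop p.1 p.2).2.1,
    fun p q hpq => (hS.prop p.1 p.2).2.2 q.1 q.2 (Subtype.coe_ne_coe.2 hpq)⟩
  rw [← not_countable_iff, countable_coe_iff]
  intro hSc
  obtain ⟨p, hp, hpp, hpS⟩ := exists_extend_biorthogonal hnonsep hrefl hSc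
  have hpS' : p ∉ S := fun h => by simpa [hpp] using (hpS p h).1
  have hins : insert p S ∈ P := by
    rintro q (rfl | hq)
    · refine ⟨hp, hpp, ?_⟩
      rintro r (rfl | hr) hne
      · exact absurd rfl hne
      · exact (hpS r hr).1
    · refine ⟨(hS.prop q hq).1, (hS.prop q hq).2.1, ?_⟩
      rintro r (rfl | hr) hne
      · exact (hpS q hq).2
      · exact (hS.prop q hq).2.2 r hr hne
  exact hpS' (hS.2 hins (subset_insert _ _) (mem_insert _ _))

theorem exists_preadjoint (hrefl : Function.Surjective (inclusionInDoubleDual 𝕜 X))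
    (T : StrongDual 𝕜 X →L[𝕜] StrongDual 𝕜 X) :
    ∃ K : X →L[𝕜] X, ∀ f x, T f x = f (K x) := by
  let e := LinearIsometryEquiv.ofSurjective (inclusionInDoubleDualLi 𝕜 (E := X)) hrefl
  refine ⟨(e.symm.toContinuousLinearEquiv : StrongDual 𝕜 (StrongDual 𝕜 X) →L[𝕜] X) ∘L
    (ContinuousLinearMap.compL 𝕜 (StrongDual 𝕜 X) (StrongDual 𝕜 X) 𝕜).flip T ∘L
    inclusionInDoubleDual 𝕜 X, fun f x => ?_⟩
  -- `f (e.symm Φ) = Φ f` for every `Φ` in the bidual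
  exact (congrArg (· f) (e.apply_symm_apply ((inclusionInDoubleDual 𝕜 X x).comp T))).symm

theorem iInf_ker_eq_polarSubmodule_span {T : κ → StrongDual 𝕜 X →L[𝕜] StrongDual 𝕜 X}
    {K : κ → X →L[𝕜] X} (hK : ∀ i f x, T i f x = f (K i x)) :
    ⨅ i, LinearMap.ker (T i : StrongDual 𝕜 X →ₗ[𝕜] StrongDual 𝕜 X) =
      polarSubmodule 𝕜 (span 𝕜 (⋃ i, range (K i))) := by
  ext f
  simp only [mem_iInf, LinearMap.mem_ker, ContinuousLinearMap.coe_coe, ContinuousLinearMap.ext_iff,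
    hK, mem_polarSubmodule_span, mem_iUnion, mem_range]
  exact ⟨fun h _ ⟨i, y, hy⟩ => hy ▸ h i y, fun h i y => h _ ⟨i, y, rfl⟩⟩

theorem polarSubmodule_span_ne_iInf_ker [Countable κ]
    (hrefl : Function.Surjective (inclusionInDoubleDual 𝕜 X))
    (hfew : ∀ T : X →L[𝕜] X, ∃ (α : 𝕜) (S : X →L[𝕜] X),
      T = α • ContinuousLinearMap.id 𝕜 X + S ∧ IsSeparable (Set.range S))
    [Uncountable ι] {x : ι ⊕ ι → X} {f : ι ⊕ ι → StrongDual 𝕜 X}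
    (hf : ∀ i, ‖f i‖ ≤ 1) (hxf : IsBiorthogonal x f)
    (T : κ → StrongDual 𝕜 X →L[𝕜] StrongDual 𝕜 X) :
    polarSubmodule 𝕜 (span 𝕜 (range (x ∘ Sum.inl))) ≠
      ⨅ i, LinearMap.ker (T i : StrongDual 𝕜 X →ₗ[𝕜] StrongDual 𝕜 X) := by
  intro hD
  choose K hK using fun i => exists_preadjoint hrefl (T i)
  rw [iInf_ker_eq_polarSubmodule_span hK] at hD
  choose α S hKS hS using fun i => hfew (K i)
  obtain hα | ⟨j, hj⟩ := forall_or_exists_not fun i => α i = 0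
  · have hK_sep : IsSeparable (⋃ i, range (K i)) :=
      .iUnion fun i => by simpa [hKS i, hα i] using hS i
    refine not_countable ((hxf.comp Sum.inl_injective).countable_of_isSeparable (fun i => hf _)
      ((hK_sep.span (R := 𝕜)).closure.mono ?_))
    rintro _ ⟨i, rfl⟩
    exact le_topologicalClosure_of_polarSubmodule_le hD.ge (subset_span (mem_range_self i))
  · set y := fun i => -(α j)⁻¹ • S j (x (Sum.inr i))
    have hy_sep : IsSeparable (range y) :=
      ((hS j).image (continuous_const_smul (-(α j)⁻¹))).mono
        (range_subset_iff.2 fun i => mem_image_of_mem _ (mem_range_self _))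
    have hxy : ∀ i, x (Sum.inr i) - y i = (α j)⁻¹ • K j (x (Sum.inr i)) := fun i => by
      simp [y, hKS, smul_add, smul_smul, inv_mul_cancel₀ hj]
    have hKW : ∀ z, K j z ∈ (span 𝕜 (range (x ∘ Sum.inl))).topologicalClosure := fun z =>
      le_topologicalClosure_of_polarSubmodule_le hD.le (subset_span (mem_iUnion.2 ⟨j, z, rfl⟩))
    refine not_countable (((hxf.comp Sum.inr_injective).of_apply_sub_eq_zero (y := y)
      fun i k => ?_).countable_of_isSeparable (fun i => hf _) hy_sep)
    show f (Sum.inr i) (x (Sum.inr k) - y k) = 0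
    rw [hxy, map_smul, apply_eq_zero_of_mem_topologicalClosure_span ?_ (hKW _), smul_zero]
    rintro _ ⟨l, rfl⟩
    exact hxf.2 Sum.inr_ne_inl

end

theorem exists_closed_subspace_not_intersection_of_kernels_general
    (X : Type*) [NormedAddCommGroup X] [NormedSpace ℂ X]
    (hnonsep : ¬ SeparableSpace X)
    (hrefl : Function.Surjective (inclusionInDoubleDual ℂ X))
    (hfew : ∀ T : X →L[ℂ] X, ∃ (α : ℂ) (S : X →L[ℂ] X),
      T = α • ContinuousLinearMap.id ℂ X + S ∧ IsSeparable (Set.range S)) :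
    ∃ D : Submodule ℂ (StrongDual ℂ X), IsClosed (D : Set (StrongDual ℂ X)) ∧
      (∀ (n : ℕ), 0 < n → ∀ T : Fin n → (StrongDual ℂ X →L[ℂ] StrongDual ℂ X),
        D ≠ ⨅ i, LinearMap.ker (T i : StrongDual ℂ X →ₗ[ℂ] StrongDual ℂ X)) ∧
      (∀ T : StrongDual ℂ X →L[ℂ] StrongDual ℂ X, LinearMap.ker (T : StrongDual ℂ X →ₗ[ℂ] StrongDual ℂ X) ≠ D) := by
  obtain ⟨ι, x, f, _, hf, hxf⟩ := exists_uncountable_isBiorthogonal hnonsep hrefl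
  obtain ⟨e⟩ : Nonempty (ι ⊕ ι ≃ ι) :=
    Cardinal.eq.1 (by simp [Cardinal.add_eq_self (Cardinal.aleph0_le_mk ι)])
  have hD {κ : Type} [Countable κ] := polarSubmodule_span_ne_iInf_ker (κ := κ) hrefl hfew
    (fun i => hf (e i)) (hxf.comp e.injective)
  refine ⟨_, StrongDual.isClosed_polarSubmodule _, fun n _ T => hD T,
    fun T hT => hD (fun _ : Unit => T) ?_⟩
  rw [iInf_const, hT]

/-- **Corollary 2.3.** Let `X` be a non-separable, reflexive complex Banach space with few
operators. Then the dual space `E = X'` contains a closed linear subspace `D` which is not of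
the form `⋂_{i=1}^n ker T_i` for any bounded operators `T_1, …, T_n` on `E`; in particular,
`D` is not the kernel of any bounded operator on `E`. -/
theorem exists_closed_subspace_not_intersection_of_kernels
    (X : Type*) [NormedAddCommGroup X] [NormedSpace ℂ X] [CompleteSpace X]
    (hnonsep : ¬ SeparableSpace X)
    (hrefl : Function.Surjective (inclusionInDoubleDual ℂ X))
    (hfew : ∀ T : X →L[ℂ] X, ∃ (α : ℂ) (S : X →L[ℂ] X),
      T = α • ContinuousLinearMap.id ℂ X + S ∧ IsSeparable (Set.range S)) :
    ∃ D : Submodule ℂ (StrongDual ℂ X), IsClosed (D : Set (StrongDual ℂ X)) ∧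
      (∀ (n : ℕ), 0 < n → ∀ T : Fin n → (StrongDual ℂ X →L[ℂ] StrongDual ℂ X),
        D ≠ ⨅ i, LinearMap.ker (T i : StrongDual ℂ X →ₗ[ℂ] StrongDual ℂ X)) ∧
      (∀ T : StrongDual ℂ X →L[ℂ] StrongDual ℂ X, LinearMap.ker (T : StrongDual ℂ X →ₗ[ℂ] StrongDual ℂ X) ≠ D) :=
  exists_closed_subspace_not_intersection_of_kernels_general X hnonsep hrefl hfew
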